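/- Let f : A → B be a homomorphism of dg-algebras inducing an isomorphism on cohomology. Then the induced map on homotopy classes of twisting sequences ts(A) → ts(B) is a bijection. -/

import Mathlib

/-!
Write a sequence `x_•` as the power series `x = ∑ xₙ Xⁿ` with `X` in degree `-2`. Twisting
sequences become Maurer–Cartan elements (`dx + x² = 0`) divisible by `X`, and a homotopy from
`x` to `y` becomes an `h` with `y - x + dh + yh - hx = 0`.

Both halves are solved one power of `X` at a time. Once a defect (of the Maurer–Cartan equation,
of the homotopy equation, or of the equation saying that two homotopies are homotopic) vanishes
below `Xⁿ`, a Bianchi-type identity such as `d(dx + x²) = (dx + x²)x - x(dx + x²)` makes its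
`n`-th coefficient a cocycle, the obstruction class. By naturality, `f` maps the obstruction on
`A` to a coboundary on `B`, where the equation is already solved up to homotopy; injectivity in
cohomology then kills the obstruction by a change of the `n`-th coefficient. The freedom left,
a cocycle, is spent through surjectivity in cohomology to kill the next defect. The
approximations converge `X`-adically.
-/

/-- A differential graded algebra over `ℤ`. -/
structure DGA where
  A : Type
  [ringA : Ring A]
  grading : ℤ → AddSubgroup A
  mul_mem : ∀ {m n : ℤ} {a b : A}, a ∈ grading m → b ∈ grading n → a * b ∈ grading (m + n)
  d : A →+ A
  d_sq : ∀ a : A, d (d a) = 0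
  d_mem : ∀ {m : ℤ} {a : A}, a ∈ grading m → d a ∈ grading (m + 1)
  leibniz : ∀ {m : ℤ} {a : A}, a ∈ grading m → ∀ b : A,
      d (a * b) = d a * b + (((-1 : ℤˣ) ^ m : ℤˣ) : ℤ) • (a * d b)

attribute [instance] DGA.ringA

/-- A twisting sequence: `x n` is `x_{2n+1}` for `n ≥ 1`. -/
def IsTwistingSeq (G : DGA) (x : ℕ → G.A) : Prop :=
  x 0 = 0 ∧ (∀ n : ℕ, x n ∈ G.grading (2 * (n : ℤ) + 1)) ∧
    ∀ n : ℕ, 1 ≤ n →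
      G.d (x n) + ∑ i ∈ Finset.Ioo 0 n, x i * x (n - i) = 0

/-- A homotopy `h_•` from the twisting sequence `x_•` to the twisting sequence `y_•`. -/
def IsHomotopy (G : DGA) (x y h : ℕ → G.A) : Prop :=
  h 0 = 0 ∧ (∀ n : ℕ, h n ∈ G.grading (2 * (n : ℤ))) ∧
    ∀ n : ℕ, 1 ≤ n →
      y n - x n + G.d (h n) +
        ∑ i ∈ Finset.Ioo 0 n, (y (n - i) * h i - h i * x (n - i)) = 0

/-- Two twisting sequences are homotopic if there is a homotopy between them. -/
def Homotopic (G : DGA) (x y : ℕ → G.A) : Prop :=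
  ∃ h : ℕ → G.A, IsHomotopy G x y h


open PowerSeries

open Finset in
lemma Finset.Nat.sum_antidiagonal_eq_sum_Ioo {M : Type*} [AddCommMonoid M] (f : ℕ → ℕ → M)
    {n : ℕ} (h₀ : f 0 n = 0) (h₁ : f n 0 = 0) :
    ∑ p ∈ antidiagonal n, f p.1 p.2 = ∑ i ∈ Ioo 0 n, f i (n - i) := by
  rw [Nat.sum_antidiagonal_eq_sum_range_succ f n]
  refine (sum_subset (fun i hi => ?_) fun i hi hi' => ?_).symm
  · simp only [mem_Ioo, mem_range] at hi ⊢; omega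
  · simp only [mem_Ioo, mem_range, not_and_or, not_lt] at hi hi'
    rcases hi' with hi' | hi'
    · rw [Nat.le_zero.1 hi', Nat.sub_zero, h₀]
    · rw [show i = n by omega, Nat.sub_self, h₁]

lemma exists_seq_of_step {α : Type*} (P : ℕ → α → Prop) (r : ℕ → α → α → Prop) {a : α}
    (ha : P 0 a) (step : ∀ n a, P n a → ∃ b, P (n + 1) b ∧ r n a b) :
    ∃ s : ℕ → α, ∀ n, P n (s n) ∧ r n (s n) (s (n + 1)) := by
  choose F hF using step
  let t : (n : ℕ) → {b // P n b} :=
    fun n => Nat.rec ⟨a, ha⟩ (fun n b => ⟨F n b.1 b.2, (hF n b.1 b.2).1⟩) n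
  exact ⟨fun n => (t n).1, fun n => ⟨(t n).2, (hF n _ (t n).2).2⟩⟩

namespace PowerSeries

variable {R : Type*}

section Semiring

variable [Semiring R]

lemma mk_coeff (φ : R⟦X⟧) : mk (fun n => coeff n φ) = φ :=
  ext fun n => coeff_mk n _

lemma map_mk {S : Type*} [Semiring S] (f : R →+* S) (a : ℕ → R) :
    map f (mk a) = mk fun n => f (a n) :=
  ext fun n => by simp

lemma map_monomial {S : Type*} [Semiring S] (f : R →+* S) (n : ℕ) (a : R) :
    map f (monomial n a) = monomial n (f a) := by
  ext m; simp [coeff_monomial, apply_ite f]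

lemma X_dvd_mk_iff {a : ℕ → R} : X ∣ mk a ↔ a 0 = 0 := by
  rw [X_dvd_iff, ← coeff_zero_eq_constantCoeff_apply, coeff_mk]

lemma coeff_mk_mul_mk {a b : ℕ → R} (ha : a 0 = 0) (hb : b 0 = 0) (n : ℕ) :
    coeff n (mk a * mk b) = ∑ i ∈ Finset.Ioo 0 n, a i * b (n - i) := by
  simp only [coeff_mul, coeff_mk]
  exact Finset.Nat.sum_antidiagonal_eq_sum_Ioo (fun i j => a i * b j) (by simp [ha]) (by simp [hb])

lemma coeff_mk_mul_mk' {a b : ℕ → R} (ha : a 0 = 0) (hb : b 0 = 0) (n : ℕ) :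
    coeff n (mk a * mk b) = ∑ i ∈ Finset.Ioo 0 n, a (n - i) * b i := by
  rw [coeff_mul, ← Finset.Nat.sum_antidiagonal_swap]
  simp only [Prod.fst_swap, Prod.snd_swap, coeff_mk]
  exact Finset.Nat.sum_antidiagonal_eq_sum_Ioo (fun i j => a j * b i) (by simp [hb]) (by simp [ha])

lemma X_pow_dvd_mul_left {n : ℕ} {a : R⟦X⟧} (b : R⟦X⟧) (ha : X ^ n ∣ a) :
    X ^ n ∣ b * a := by
  obtain ⟨c, rfl⟩ := ha
  exact ⟨b * c, by rw [← mul_assoc, (commute_X_pow b n).eq, mul_assoc]⟩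

lemma X_pow_succ_dvd_mul {n : ℕ} {a b : R⟦X⟧} (ha : X ∣ a) (hb : X ^ n ∣ b) :
    X ^ (n + 1) ∣ a * b ∧ X ^ (n + 1) ∣ b * a := by
  obtain ⟨a, rfl⟩ := ha
  obtain ⟨b, rfl⟩ := hb
  constructor
  · exact ⟨a * b, by rw [pow_succ', mul_assoc, mul_assoc, ← mul_assoc a,
      (commute_X_pow a n).eq, mul_assoc]⟩
  · exact ⟨b * a, by rw [pow_succ, mul_assoc, mul_assoc, ← mul_assoc b, (commute_X b).eq,
      mul_assoc]⟩

lemma coeff_mul_eq_zero_of_X_dvd {n : ℕ} {a b : R⟦X⟧} (ha : X ∣ a) (hb : X ^ n ∣ b) :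
    coeff n (a * b) = 0 ∧ coeff n (b * a) = 0 := by
  obtain ⟨hab, hba⟩ := X_pow_succ_dvd_mul ha hb
  exact ⟨X_pow_dvd_iff.1 hab n n.lt_succ_self, X_pow_dvd_iff.1 hba n n.lt_succ_self⟩

lemma X_pow_succ_dvd_iff {n : ℕ} {a : R⟦X⟧} :
    X ^ (n + 1) ∣ a ↔ X ^ n ∣ a ∧ coeff n a = 0 := by
  simp only [X_pow_dvd_iff, Nat.lt_succ_iff_lt_or_eq, or_imp, forall_and, forall_eq]

lemma X_pow_dvd_monomial (n : ℕ) (a : R) : X ^ n ∣ monomial n a :=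
  X_pow_dvd_iff.2 fun m hm => by rw [coeff_monomial, if_neg hm.ne]

lemma eq_zero_of_forall_X_pow_dvd {a : R⟦X⟧} (h : ∀ n, X ^ n ∣ a) : a = 0 :=
  ext fun n => by simpa using X_pow_dvd_iff.1 (h (n + 1)) n n.lt_succ_self

end Semiring

section Ring

variable [Ring R]

lemma X_pow_succ_dvd_of_dvd_sub {n : ℕ} {e e' : R⟦X⟧} {a : R}
    (h : X ^ (n + 1) ∣ e' - (e + monomial n a)) (he : X ^ n ∣ e) (hc : coeff n e + a = 0) :
    X ^ (n + 1) ∣ e' := by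
  have hmain : X ^ (n + 1) ∣ e + monomial n a :=
    X_pow_succ_dvd_iff.2 ⟨dvd_add he (X_pow_dvd_monomial n a), by simpa using hc⟩
  simpa using dvd_add h hmain

lemma exists_X_pow_dvd_sub (S : ℕ → R⟦X⟧) (hS : ∀ n, X ^ n ∣ S (n + 1) - S n) :
    ∃ L : R⟦X⟧, ∀ n, X ^ n ∣ L - S n := by
  have hstable : ∀ m n, m < n → coeff m (S n) = coeff m (S (m + 1)) := by
    intro m n hmn
    induction n, hmn using Nat.le_induction with
    | base => rfl
    | succ n hmn ih =>
      rw [← ih, ← sub_eq_zero, ← map_sub]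
      exact X_pow_dvd_iff.1 (hS n) m hmn
  refine ⟨mk fun m => coeff m (S (m + 1)), fun n => X_pow_dvd_iff.2 fun m hm => ?_⟩
  rw [map_sub, coeff_mk, hstable m n hm, sub_self]

end Ring

end PowerSeries

namespace DGA

section Defects

variable (D : DGA)

def curvature (x : D.A) : D.A := D.d x + x * x

def homotopyDefect (x y h : D.A) : D.A := y - x + D.d h + y * h - h * x

/-- Vanishes when `c` is a homotopy from the homotopy `k` to the homotopy `g` (both from `x` to
`y`), for the differential on `Hom(x, y)` twisted by `x` and `y`. -/
def homotopy₂Defect (x y k g c : D.A) : D.A := g - k - (D.d c + y * c + c * x)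

variable {D}

lemma d_mul_of_odd {m : ℤ} (hm : Odd m) {a : D.A} (ha : a ∈ D.grading m) (b : D.A) :
    D.d (a * b) = D.d a * b - a * D.d b := by
  rw [D.leibniz ha, hm.neg_one_zpow]; simp [sub_eq_add_neg]

lemma d_mul_of_even {m : ℤ} (hm : Even m) {a : D.A} (ha : a ∈ D.grading m) (b : D.A) :
    D.d (a * b) = D.d a * b + a * D.d b := by
  rw [D.leibniz ha, hm.neg_one_zpow]; simp

lemma d_curvature {m : ℤ} (hm : Odd m) {x : D.A} (hx : x ∈ D.grading m) :
    D.d (D.curvature x) = D.curvature x * x - x * D.curvature x := by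
  simp only [curvature, map_add, D.d_sq, d_mul_of_odd hm hx]
  noncomm_ring

lemma d_homotopyDefect {m l : ℤ} (hm : Odd m) (hl : Even l) {x y h : D.A}
    (hy : y ∈ D.grading m) (hh : h ∈ D.grading l) :
    D.d (D.homotopyDefect x y h) = D.curvature y * (1 + h) - (1 + h) * D.curvature x
      - y * D.homotopyDefect x y h - D.homotopyDefect x y h * x := by
  simp only [homotopyDefect, curvature, map_add, map_sub, D.d_sq, d_mul_of_odd hm hy,
    d_mul_of_even hl hh]
  noncomm_ring

lemma d_homotopy₂Defect {m l : ℤ} (hm : Odd m) (hl : Odd l) {x y k g c : D.A}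
    (hy : y ∈ D.grading m) (hc : c ∈ D.grading l) :
    D.d (D.homotopy₂Defect x y k g c) = D.homotopyDefect x y g - D.homotopyDefect x y k
      - y * D.homotopy₂Defect x y k g c + D.homotopy₂Defect x y k g c * x
      - D.curvature y * c + c * D.curvature x := by
  simp only [homotopy₂Defect, homotopyDefect, curvature, map_add, map_sub, D.d_sq,
    d_mul_of_odd hm hy, d_mul_of_odd hl hc]
  noncomm_ring

lemma curvature_add (x u : D.A) :
    D.curvature (x + u) = D.curvature x + D.d u + (x * u + u * x + u * u) := by
  simp only [curvature, map_add]; noncomm_ring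

lemma homotopyDefect_add (x y h u v : D.A) :
    D.homotopyDefect (x + u) y (h + v)
      = D.homotopyDefect x y h - u + D.d v + (y * v - v * x - h * u - v * u) := by
  simp only [homotopyDefect, map_add]; noncomm_ring

lemma homotopy₂Defect_add (x y k g c u v : D.A) :
    D.homotopy₂Defect x y k (g + u) (c + v)
      = D.homotopy₂Defect x y k g c + u - (D.d v + y * v + v * x) := by
  simp only [homotopy₂Defect, map_add]; noncomm_ring

lemma curvature_mem {x : D.A} (hx : x ∈ D.grading 1) : D.curvature x ∈ D.grading 2 :=
  add_mem (D.d_mem hx) (D.mul_mem hx hx)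

lemma homotopyDefect_mem {x y h : D.A} (hx : x ∈ D.grading 1) (hy : y ∈ D.grading 1)
    (hh : h ∈ D.grading 0) : D.homotopyDefect x y h ∈ D.grading 1 :=
  sub_mem (add_mem (add_mem (sub_mem hy hx) (by simpa using D.d_mem hh))
    (by simpa using D.mul_mem hy hh)) (by simpa using D.mul_mem hh hx)

lemma homotopy₂Defect_mem {x y k g c : D.A} (hx : x ∈ D.grading 1) (hy : y ∈ D.grading 1)
    (hk : k ∈ D.grading 0) (hg : g ∈ D.grading 0) (hc : c ∈ D.grading (-1)) :
    D.homotopy₂Defect x y k g c ∈ D.grading 0 :=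
  sub_mem (sub_mem hg hk) (add_mem (add_mem (by simpa using D.d_mem hc)
    (by simpa using D.mul_mem hy hc)) (by simpa using D.mul_mem hc hx))

lemma map_curvature {E : DGA} {f : D.A →+* E.A} (hf : ∀ a, f (D.d a) = E.d (f a)) (x : D.A) :
    f (D.curvature x) = E.curvature (f x) := by
  simp [curvature, hf]

lemma map_homotopyDefect {E : DGA} {f : D.A →+* E.A} (hf : ∀ a, f (D.d a) = E.d (f a))
    (x y h : D.A) : f (D.homotopyDefect x y h) = E.homotopyDefect (f x) (f y) (f h) := by
  simp [homotopyDefect, hf]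

end Defects

noncomputable section PowerSeriesDGA

variable (D : DGA)

def dSeries : D.A⟦X⟧ →+ D.A⟦X⟧ where
  toFun a := PowerSeries.mk fun n => D.d (coeff n a)
  map_zero' := by ext; simp
  map_add' a b := by ext; simp

@[simp] lemma coeff_dSeries (a : D.A⟦X⟧) (n : ℕ) : coeff n (D.dSeries a) = D.d (coeff n a) :=
  coeff_mk n fun n => D.d (coeff n a)

def seriesGrading (p : ℤ) : AddSubgroup D.A⟦X⟧ where
  carrier := {a | ∀ n : ℕ, coeff n a ∈ D.grading (2 * n + p)}
  add_mem' ha hb n := by simpa using add_mem (ha n) (hb n)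
  zero_mem' n := by simp
  neg_mem' ha n := by simpa using neg_mem (ha n)

/-- `D⟦X⟧` with `X` in degree `-2`, so that `∑ xₙ Xⁿ` has degree `1` when each `xₙ` has
degree `2n + 1`. -/
@[reducible] def powerSeries : DGA where
  A := D.A⟦X⟧
  grading := D.seriesGrading
  mul_mem {m n a b} ha hb k := by
    rw [coeff_mul]
    refine sum_mem fun p hp => ?_
    rw [Finset.HasAntidiagonal.mem_antidiagonal] at hp
    convert D.mul_mem (ha p.1) (hb p.2) using 2
    rw [← hp]; push_cast; ring
  d := D.dSeries
  d_sq a := by ext; simp [D.d_sq]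
  d_mem ha n := by simpa [add_assoc] using D.d_mem (ha n)
  leibniz {m a} ha b := by
    ext n
    simp only [coeff_dSeries, coeff_mul, map_sum, map_add, map_zsmul, Finset.smul_sum,
      ← Finset.sum_add_distrib]
    refine Finset.sum_congr rfl fun p _ => ?_
    rw [D.leibniz (ha p.1), zpow_add, zpow_mul]
    simp

variable {D}

lemma monomial_mem_seriesGrading {n : ℕ} {p : ℤ} {a : D.A} (ha : a ∈ D.grading (2 * n + p)) :
    monomial n a ∈ D.seriesGrading p := fun m => by
  rw [coeff_monomial]
  split_ifs with h
  · exact h ▸ ha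
  · exact zero_mem _

lemma dSeries_monomial (n : ℕ) (a : D.A) : D.dSeries (monomial n a) = monomial n (D.d a) := by
  ext m; simp [coeff_monomial, apply_ite D.d]

lemma X_pow_dvd_dSeries {n : ℕ} {a : D.A⟦X⟧} (ha : X ^ n ∣ a) : X ^ n ∣ D.dSeries a :=
  X_pow_dvd_iff.2 fun m hm => by simp [X_pow_dvd_iff.1 ha m hm]

lemma map_dSeries {E : DGA} {f : D.A →+* E.A} (hf : ∀ a, f (D.d a) = E.d (f a))
    (a : D.A⟦X⟧) :
    map f (D.dSeries a) = E.dSeries (map f a) := by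
  ext n; simp [hf]

lemma map_mem_seriesGrading {E : DGA} {f : D.A →+* E.A}
    (hf : ∀ (m : ℤ) (a : D.A), a ∈ D.grading m → f a ∈ E.grading m) {p : ℤ}
    {a : D.A⟦X⟧} (ha : a ∈ D.seriesGrading p) : map f a ∈ E.seriesGrading p := fun n => by
  simpa using hf _ _ (ha n)

lemma mem_seriesGrading_of_X_pow_dvd_sub {p : ℤ} {S : ℕ → D.A⟦X⟧} {L : D.A⟦X⟧}
    (hS : ∀ n, S n ∈ D.seriesGrading p) (hL : ∀ n, X ^ n ∣ L - S n) :
    L ∈ D.seriesGrading p := fun n => by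
  have h := X_pow_dvd_iff.1 (hL (n + 1)) n n.lt_succ_self
  rw [map_sub, sub_eq_zero] at h
  exact h ▸ hS (n + 1) n

end PowerSeriesDGA

section Approximations

variable {D : DGA}

structure IsTwistingMod (D : DGA) (n : ℕ) (x : D.A⟦X⟧) : Prop where
  mem : x ∈ D.seriesGrading 1
  X_dvd : X ∣ x
  X_pow_dvd_curvature : X ^ n ∣ D.powerSeries.curvature x

structure IsHomotopyMod (D : DGA) (n : ℕ) (x y h : D.A⟦X⟧) : Prop where
  mem : h ∈ D.seriesGrading 0
  X_dvd : X ∣ h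
  X_pow_dvd_homotopyDefect : X ^ n ∣ D.powerSeries.homotopyDefect x y h

structure IsHomotopy₂Mod (D : DGA) (n : ℕ) (x y k g c : D.A⟦X⟧) : Prop where
  mem : c ∈ D.seriesGrading (-1)
  X_pow_dvd_homotopy₂Defect : X ^ n ∣ D.powerSeries.homotopy₂Defect x y k g c

lemma IsTwistingMod.mono {m n : ℕ} {x : D.A⟦X⟧} (hx : D.IsTwistingMod n x) (hmn : m ≤ n) :
    D.IsTwistingMod m x :=
  ⟨hx.mem, hx.X_dvd, (pow_dvd_pow X hmn).trans hx.X_pow_dvd_curvature⟩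

lemma IsHomotopyMod.mono {m n : ℕ} {x y h : D.A⟦X⟧} (hh : D.IsHomotopyMod n x y h)
    (hmn : m ≤ n) : D.IsHomotopyMod m x y h :=
  ⟨hh.mem, hh.X_dvd, (pow_dvd_pow X hmn).trans hh.X_pow_dvd_homotopyDefect⟩

lemma IsTwistingMod.map {E : DGA} {f : D.A →+* E.A}
    (hf_deg : ∀ (m : ℤ) (a : D.A), a ∈ D.grading m → f a ∈ E.grading m)
    (hf_d : ∀ a, f (D.d a) = E.d (f a)) {n : ℕ} {x : D.A⟦X⟧} (hx : D.IsTwistingMod n x) :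
    E.IsTwistingMod n (PowerSeries.map f x) where
  mem := map_mem_seriesGrading hf_deg hx.mem
  X_dvd := by simpa using map_dvd (PowerSeries.map f) hx.X_dvd
  X_pow_dvd_curvature := by
    simpa [← map_curvature (D := D.powerSeries) (E := E.powerSeries) (map_dSeries hf_d)] using
      map_dvd (PowerSeries.map f) hx.X_pow_dvd_curvature

lemma IsTwistingMod.d_coeff_curvature {n : ℕ} {x : D.A⟦X⟧} (hx : D.IsTwistingMod n x) :
    D.d (coeff n (D.powerSeries.curvature x)) = 0 := by
  have h := congrArg (coeff n) (d_curvature (D := D.powerSeries) odd_one hx.mem)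
  obtain ⟨h₁, h₂⟩ := coeff_mul_eq_zero_of_X_dvd hx.X_dvd hx.X_pow_dvd_curvature
  rwa [map_sub, h₁, h₂, sub_zero, coeff_dSeries] at h

lemma IsHomotopyMod.d_coeff_homotopyDefect {n : ℕ} {x y h : D.A⟦X⟧}
    (hx : D.IsTwistingMod n x) (hy : D.IsTwistingMod n y) (hh : D.IsHomotopyMod n x y h) :
    D.d (coeff n (D.powerSeries.homotopyDefect x y h))
      = coeff n (D.powerSeries.curvature y) - coeff n (D.powerSeries.curvature x) := by
  have H := congrArg (coeff n)
    (d_homotopyDefect (D := D.powerSeries) (x := x) odd_one (by decide) hy.mem hh.mem)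
  obtain ⟨-, h₁⟩ := coeff_mul_eq_zero_of_X_dvd hh.X_dvd hy.X_pow_dvd_curvature
  obtain ⟨h₂, -⟩ := coeff_mul_eq_zero_of_X_dvd hh.X_dvd hx.X_pow_dvd_curvature
  obtain ⟨h₃, -⟩ := coeff_mul_eq_zero_of_X_dvd hy.X_dvd hh.X_pow_dvd_homotopyDefect
  obtain ⟨-, h₄⟩ := coeff_mul_eq_zero_of_X_dvd hx.X_dvd hh.X_pow_dvd_homotopyDefect
  simp only [mul_add, add_mul, mul_one, one_mul, map_sub, map_add, h₁, h₂, h₃, h₄,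
    coeff_dSeries] at H
  rw [H]; abel

lemma IsHomotopy₂Mod.d_coeff_homotopy₂Defect {n : ℕ} {x y k g c : D.A⟦X⟧}
    (hx : D.IsTwistingMod (n + 1) x) (hy : D.IsTwistingMod (n + 1) y)
    (hc : D.IsHomotopy₂Mod n x y k g c) :
    D.d (coeff n (D.powerSeries.homotopy₂Defect x y k g c))
      = coeff n (D.powerSeries.homotopyDefect x y g)
        - coeff n (D.powerSeries.homotopyDefect x y k) := by
  have H := congrArg (coeff n) (d_homotopy₂Defect (D := D.powerSeries) (x := x) (k := k)
    (g := g) odd_one (by decide : Odd (-1 : ℤ)) hy.mem hc.mem)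
  obtain ⟨h₁, -⟩ := coeff_mul_eq_zero_of_X_dvd hy.X_dvd hc.X_pow_dvd_homotopy₂Defect
  obtain ⟨-, h₂⟩ := coeff_mul_eq_zero_of_X_dvd hx.X_dvd hc.X_pow_dvd_homotopy₂Defect
  have h₃ := X_pow_dvd_iff.1 (hy.X_pow_dvd_curvature.mul_right c) n n.lt_succ_self
  have h₄ := X_pow_dvd_iff.1 (X_pow_dvd_mul_left c hx.X_pow_dvd_curvature) n n.lt_succ_self
  simp only [map_sub, map_add, h₁, h₂, h₃, h₄, coeff_dSeries] at H
  rw [H]; abel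

lemma X_pow_succ_dvd_curvature_add_monomial {n : ℕ} (hn : n ≠ 0) {x : D.A⟦X⟧} (hx : X ∣ x)
    (a : D.A) :
    X ^ (n + 1) ∣ D.powerSeries.curvature (x + monomial n a)
      - (D.powerSeries.curvature x + monomial n (D.d a)) := by
  have hm := X_pow_dvd_monomial n a
  have hmX : X ∣ monomial n a := (dvd_pow_self X hn).trans hm
  have key : D.powerSeries.curvature (x + monomial n a)
      - (D.powerSeries.curvature x + monomial n (D.d a))
      = x * monomial n a + monomial n a * x + monomial n a * monomial n a := by
    rw [curvature_add, show D.powerSeries.d (monomial n a) = monomial n (D.d a) from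
      dSeries_monomial n a]
    abel
  rw [key]
  exact dvd_add (dvd_add (X_pow_succ_dvd_mul hx hm).1 (X_pow_succ_dvd_mul hx hm).2)
    (X_pow_succ_dvd_mul hmX hm).1

lemma X_pow_succ_dvd_homotopyDefect_add_monomial {n : ℕ} (hn : n ≠ 0) {x y h : D.A⟦X⟧}
    (hx : X ∣ x) (hy : X ∣ y) (hh : X ∣ h) (a b : D.A) :
    X ^ (n + 1) ∣ D.powerSeries.homotopyDefect (x + monomial n a) y (h + monomial n b)
      - (D.powerSeries.homotopyDefect x y h + monomial n (D.d b - a)) := by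
  have ha := X_pow_dvd_monomial n a
  have hb := X_pow_dvd_monomial n b
  have hbX : X ∣ monomial n b := (dvd_pow_self X hn).trans hb
  have key : D.powerSeries.homotopyDefect (x + monomial n a) y (h + monomial n b)
      - (D.powerSeries.homotopyDefect x y h + monomial n (D.d b - a))
      = y * monomial n b - monomial n b * x - h * monomial n a
        - monomial n b * monomial n a := by
    rw [homotopyDefect_add, show D.powerSeries.d (monomial n b) = monomial n (D.d b) from
      dSeries_monomial n b, map_sub]
    abel
  rw [key]
  exact dvd_sub (dvd_sub (dvd_sub (X_pow_succ_dvd_mul hy hb).1 (X_pow_succ_dvd_mul hx hb).2)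
    (X_pow_succ_dvd_mul hh ha).1) (X_pow_succ_dvd_mul hbX ha).1

lemma X_pow_succ_dvd_homotopy₂Defect_add_monomial {n : ℕ} {x y k g c : D.A⟦X⟧}
    (hx : X ∣ x) (hy : X ∣ y) (a b : D.A) :
    X ^ (n + 1) ∣ D.powerSeries.homotopy₂Defect x y k (g + monomial n a) (c + monomial n b)
      - (D.powerSeries.homotopy₂Defect x y k g c + monomial n (a - D.d b)) := by
  have hb := X_pow_dvd_monomial n b
  have key : D.powerSeries.homotopy₂Defect x y k (g + monomial n a) (c + monomial n b)
      - (D.powerSeries.homotopy₂Defect x y k g c + monomial n (a - D.d b))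
      = -(y * monomial n b + monomial n b * x) := by
    rw [homotopy₂Defect_add, show D.powerSeries.d (monomial n b) = monomial n (D.d b) from
      dSeries_monomial n b, map_sub]
    abel
  rw [key]
  exact (dvd_add (X_pow_succ_dvd_mul hy hb).1 (X_pow_succ_dvd_mul hx hb).2).neg_right

lemma isTwistingMod_of_X_pow_dvd_sub {S : ℕ → D.A⟦X⟧} {L : D.A⟦X⟧}
    (hS : ∀ n, D.IsTwistingMod n (S n)) (hL : ∀ n, X ^ n ∣ L - S n) (n : ℕ) :
    D.IsTwistingMod n L where
  mem := mem_seriesGrading_of_X_pow_dvd_sub (fun n => (hS n).mem) hL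
  X_dvd := by
    rw [← sub_add_cancel L (S 1)]
    exact dvd_add (by simpa using hL 1) (hS 1).X_dvd
  X_pow_dvd_curvature := by
    have hu := hL n
    rw [← add_sub_cancel (S n) L, curvature_add]
    exact dvd_add (dvd_add (hS n).X_pow_dvd_curvature (X_pow_dvd_dSeries hu))
      (dvd_add (dvd_add (X_pow_dvd_mul_left _ hu) (hu.mul_right _)) (hu.mul_right _))

lemma isHomotopyMod_of_X_pow_dvd_sub {xs hs : ℕ → D.A⟦X⟧} {x y h : D.A⟦X⟧}
    (hS : ∀ n, D.IsHomotopyMod n (xs n) y (hs n)) (hx : ∀ n, X ^ n ∣ x - xs n)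
    (hh : ∀ n, X ^ n ∣ h - hs n) (n : ℕ) : D.IsHomotopyMod n x y h where
  mem := mem_seriesGrading_of_X_pow_dvd_sub (fun n => (hS n).mem) hh
  X_dvd := by
    rw [← sub_add_cancel h (hs 1)]
    exact dvd_add (by simpa using hh 1) (hS 1).X_dvd
  X_pow_dvd_homotopyDefect := by
    have hu := hx n
    have hv := hh n
    rw [← add_sub_cancel (xs n) x, ← add_sub_cancel (hs n) h, homotopyDefect_add]
    refine dvd_add (dvd_add (dvd_sub (hS n).X_pow_dvd_homotopyDefect hu) (X_pow_dvd_dSeries hv))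
      (dvd_sub (dvd_sub (dvd_sub (X_pow_dvd_mul_left _ hv) (hv.mul_right _))
        (X_pow_dvd_mul_left _ hu)) (hv.mul_right _))

lemma isTwistingSeq_iff (x : ℕ → D.A) :
    IsTwistingSeq D x ↔ ∀ n, D.IsTwistingMod n (PowerSeries.mk x) := by
  have hcoeff (h0 : x 0 = 0) (n : ℕ) : coeff n (D.powerSeries.curvature (PowerSeries.mk x))
      = D.d (x n) + ∑ i ∈ Finset.Ioo 0 n, x i * x (n - i) := by
    rw [curvature, map_add, coeff_mk_mul_mk h0 h0]
    simp
  constructor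
  · rintro ⟨h0, hdeg, heq⟩ n
    have hc : D.powerSeries.curvature (PowerSeries.mk x) = 0 := ext fun m => by
      rw [hcoeff h0, map_zero]
      rcases Nat.eq_zero_or_pos m with rfl | hm
      · simp [h0]
      · exact heq m hm
    exact ⟨fun m => by simpa using hdeg m, X_dvd_mk_iff.2 h0, hc ▸ dvd_zero _⟩
  · intro h
    have h0 := X_dvd_mk_iff.1 (h 0).X_dvd
    have hc := eq_zero_of_forall_X_pow_dvd fun n => (h n).X_pow_dvd_curvature
    refine ⟨h0, fun n => by simpa using (h 0).mem n, fun n _ => ?_⟩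
    rw [← hcoeff h0, hc, map_zero]

lemma isHomotopy_iff {x y : ℕ → D.A} (hx : x 0 = 0) (hy : y 0 = 0) (h : ℕ → D.A) :
    IsHomotopy D x y h ↔
      ∀ n, D.IsHomotopyMod n (PowerSeries.mk x) (PowerSeries.mk y) (PowerSeries.mk h) := by
  have hcoeff (h0 : h 0 = 0) (n : ℕ) : coeff n
      (D.powerSeries.homotopyDefect (PowerSeries.mk x) (PowerSeries.mk y) (PowerSeries.mk h))
        = y n - x n + D.d (h n)
          + ∑ i ∈ Finset.Ioo 0 n, (y (n - i) * h i - h i * x (n - i)) := by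
    rw [homotopyDefect, map_sub, map_add, coeff_mk_mul_mk' hy h0, coeff_mk_mul_mk h0 hx,
      Finset.sum_sub_distrib, add_sub_assoc]
    simp
  constructor
  · rintro ⟨h0, hdeg, heq⟩ n
    have hd : D.powerSeries.homotopyDefect (PowerSeries.mk x) (PowerSeries.mk y)
        (PowerSeries.mk h) = 0 := ext fun m => by
      rw [hcoeff h0, map_zero]
      rcases Nat.eq_zero_or_pos m with rfl | hm
      · simp [hx, hy, h0]
      · exact heq m hm
    exact ⟨fun m => by simpa using hdeg m, X_dvd_mk_iff.2 h0, hd ▸ dvd_zero _⟩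
  · intro hh
    have h0 := X_dvd_mk_iff.1 (hh 0).X_dvd
    have hd := eq_zero_of_forall_X_pow_dvd fun n => (hh n).X_pow_dvd_homotopyDefect
    refine ⟨h0, fun n => by simpa using (hh 0).mem n, fun n _ => ?_⟩
    rw [← hcoeff h0, hd, map_zero]

end Approximations

section QuasiIso

structure IsQuasiIso (G H : DGA) (f : G.A →+* H.A) : Prop where
  map_mem : ∀ (m : ℤ) (a : G.A), a ∈ G.grading m → f a ∈ H.grading m
  map_d : ∀ a : G.A, f (G.d a) = H.d (f a)
  surj_cohomology : ∀ (m : ℤ) (b : H.A), b ∈ H.grading m → H.d b = 0 →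
    ∃ a c, a ∈ G.grading m ∧ G.d a = 0 ∧ c ∈ H.grading (m - 1) ∧ f a - b = H.d c
  inj_cohomology : ∀ (m : ℤ) (a : G.A), a ∈ G.grading m → G.d a = 0 →
    (∃ c, c ∈ H.grading (m - 1) ∧ f a = H.d c) →
    ∃ c', c' ∈ G.grading (m - 1) ∧ a = G.d c'

variable {G H : DGA} {f : G.A →+* H.A}

lemma IsQuasiIso.exists_lift_step (hf : IsQuasiIso G H f) {n : ℕ} (hn : n ≠ 0) {y : H.A⟦X⟧}
    (hy : H.IsTwistingMod (n + 1) y) {x : G.A⟦X⟧} {h : H.A⟦X⟧} (hx : G.IsTwistingMod n x)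
    (hh : H.IsHomotopyMod n (map f x) y h) :
    ∃ x' h', (G.IsTwistingMod (n + 1) x' ∧ H.IsHomotopyMod (n + 1) (map f x') y h') ∧
      X ^ n ∣ x' - x ∧ X ^ n ∣ h' - h := by
  have hFx := hx.map hf.map_mem hf.map_d
  set o := coeff n (G.powerSeries.curvature x)
  set e := coeff n (H.powerSeries.homotopyDefect (map f x) y h)
  have hy0 : coeff n (H.powerSeries.curvature y) = 0 :=
    X_pow_dvd_iff.1 hy.X_pow_dvd_curvature n n.lt_succ_self
  have hde : H.d e = -f o := by
    rw [hh.d_coeff_homotopyDefect hFx (hy.mono n.le_succ), hy0, ← coeff_map,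
      map_curvature (D := G.powerSeries) (E := H.powerSeries) (map_dSeries hf.map_d), zero_sub]
  have ho : o ∈ G.grading (2 * n + 2) := curvature_mem (D := G.powerSeries) hx.mem n
  have he : e ∈ H.grading (2 * n + 1) :=
    homotopyDefect_mem (D := H.powerSeries) hFx.mem hy.mem hh.mem n
  -- the obstruction `o` is a cocycle whose image is exact, so it is exact
  obtain ⟨w, hw, how⟩ := hf.inj_cohomology _ o ho hx.d_coeff_curvature
    ⟨-e, by convert neg_mem he using 2; ring, by rw [map_neg, hde, neg_neg]⟩
  replace hw : w ∈ G.grading (2 * n + 1) := by convert hw using 2; ring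
  -- after correcting `x` by `w`, the homotopy obstruction `e + f w` is a cocycle
  have hε : H.d (e + f w) = 0 := by rw [map_add, hde, ← hf.map_d, ← how, neg_add_cancel]
  obtain ⟨a, c, ha, hda, hc, hac⟩ := hf.surj_cohomology _ _ (add_mem he (hf.map_mem _ _ hw)) hε
  have hF : map f (x + monomial n (a - w)) = map f x + monomial n (f (a - w)) := by
    rw [map_add, map_monomial]
  refine ⟨x + monomial n (a - w), h + monomial n c,
    ⟨⟨?_, ?_, ?_⟩, ⟨?_, ?_, ?_⟩⟩, ?_, ?_⟩
  · exact add_mem hx.mem (monomial_mem_seriesGrading (sub_mem ha hw))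
  · exact dvd_add hx.X_dvd ((dvd_pow_self X hn).trans (X_pow_dvd_monomial n _))
  · refine X_pow_succ_dvd_of_dvd_sub (X_pow_succ_dvd_curvature_add_monomial hn hx.X_dvd _)
      hx.X_pow_dvd_curvature ?_
    rw [map_sub, hda, ← how]; abel
  · exact add_mem hh.mem (monomial_mem_seriesGrading (by simpa using hc))
  · exact dvd_add hh.X_dvd ((dvd_pow_self X hn).trans (X_pow_dvd_monomial n _))
  · rw [hF]
    refine X_pow_succ_dvd_of_dvd_sub (X_pow_succ_dvd_homotopyDefect_add_monomial hn hFx.X_dvd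
      hy.X_dvd hh.X_dvd _ _) hh.X_pow_dvd_homotopyDefect ?_
    rw [← hac, map_sub]; abel
  · simpa using X_pow_dvd_monomial n (a - w)
  · simpa using X_pow_dvd_monomial n c

lemma IsQuasiIso.exists_homotopy_step (hf : IsQuasiIso G H f) {n : ℕ} (hn : n ≠ 0)
    {x x' : G.A⟦X⟧} (hx : G.IsTwistingMod (n + 1) x) (hx' : G.IsTwistingMod (n + 1) x')
    {k : H.A⟦X⟧} (hk : H.IsHomotopyMod (n + 1) (map f x) (map f x') k) {g : G.A⟦X⟧}
    {c : H.A⟦X⟧} (hg : G.IsHomotopyMod n x x' g)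
    (hc : H.IsHomotopy₂Mod n (map f x) (map f x') k (map f g) c) :
    ∃ g' c', (G.IsHomotopyMod (n + 1) x x' g' ∧
      H.IsHomotopy₂Mod (n + 1) (map f x) (map f x') k (map f g') c') ∧ X ^ n ∣ g' - g := by
  have hFx := hx.map hf.map_mem hf.map_d
  have hFx' := hx'.map hf.map_mem hf.map_d
  set e := coeff n (G.powerSeries.homotopyDefect x x' g)
  set r := coeff n (H.powerSeries.homotopy₂Defect (map f x) (map f x') k (map f g) c)
  have hde : G.d e = 0 := by
    rw [hg.d_coeff_homotopyDefect (hx.mono n.le_succ) (hx'.mono n.le_succ),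
      X_pow_dvd_iff.1 hx.X_pow_dvd_curvature n n.lt_succ_self,
      X_pow_dvd_iff.1 hx'.X_pow_dvd_curvature n n.lt_succ_self, sub_zero]
  have hdr : H.d r = f e := by
    rw [hc.d_coeff_homotopy₂Defect hFx hFx', X_pow_dvd_iff.1 hk.X_pow_dvd_homotopyDefect n
      n.lt_succ_self, sub_zero, ← map_homotopyDefect (D := G.powerSeries) (E := H.powerSeries)
      (map_dSeries hf.map_d), coeff_map]
  have he : e ∈ G.grading (2 * n + 1) :=
    homotopyDefect_mem (D := G.powerSeries) hx.mem hx'.mem hg.mem n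
  have hr : r ∈ H.grading (2 * n) := by
    simpa using homotopy₂Defect_mem (D := H.powerSeries) hFx.mem hFx'.mem hk.mem
      (map_mem_seriesGrading hf.map_mem hg.mem) hc.mem n
  -- the relative obstruction `e` is a cocycle whose image is exact, so it is exact
  obtain ⟨v, hv, hev⟩ := hf.inj_cohomology _ e he hde ⟨r, by simpa using hr, hdr.symm⟩
  replace hv : v ∈ G.grading (2 * n) := by simpa using hv
  -- after correcting `g` by `v`, the second obstruction `r - f v` is a cocycle
  have hρ : H.d (r - f v) = 0 := by rw [map_sub, hdr, ← hf.map_d, ← hev, sub_self]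
  obtain ⟨a, c₀, ha, hda, hc₀, hac⟩ :=
    hf.surj_cohomology _ _ (sub_mem hr (hf.map_mem _ _ hv)) hρ
  have hF : map f (g + monomial n (-(v + a))) = map f g + monomial n (f (-(v + a))) := by
    rw [map_add, map_monomial]
  refine ⟨g + monomial n (-(v + a)), c + monomial n (-c₀), ⟨⟨?_, ?_, ?_⟩, ⟨?_, ?_⟩⟩, ?_⟩
  · exact add_mem hg.mem (monomial_mem_seriesGrading (by simpa using neg_mem (add_mem hv ha)))
  · exact dvd_add hg.X_dvd ((dvd_pow_self X hn).trans (X_pow_dvd_monomial n _))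
  · have h := X_pow_succ_dvd_homotopyDefect_add_monomial hn hx.X_dvd hx'.X_dvd hg.X_dvd 0
      (-(v + a))
    rw [map_zero, add_zero] at h
    refine X_pow_succ_dvd_of_dvd_sub h hg.X_pow_dvd_homotopyDefect ?_
    rw [sub_zero, map_neg, map_add, hda, ← hev]; abel
  · exact add_mem hc.mem
      (monomial_mem_seriesGrading (by simpa [sub_eq_add_neg] using neg_mem hc₀))
  · rw [hF]
    refine X_pow_succ_dvd_of_dvd_sub (X_pow_succ_dvd_homotopy₂Defect_add_monomial hFx.X_dvd
      hFx'.X_dvd _ _) hc.X_pow_dvd_homotopy₂Defect ?_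
    rw [map_neg, map_neg, map_add, ← hac]; abel
  · simpa using X_pow_dvd_monomial n (-(v + a))

lemma IsQuasiIso.exists_twisting_lift (hf : IsQuasiIso G H f) {y : H.A⟦X⟧}
    (hy : ∀ n, H.IsTwistingMod n y) :
    ∃ x h, ∀ n, G.IsTwistingMod n x ∧ H.IsHomotopyMod n (map f x) y h := by
  obtain ⟨S, hS⟩ := exists_seq_of_step
    (fun n (s : G.A⟦X⟧ × H.A⟦X⟧) =>
      G.IsTwistingMod (n + 1) s.1 ∧ H.IsHomotopyMod (n + 1) (map f s.1) y s.2)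
    (fun n s s' => X ^ (n + 1) ∣ s'.1 - s.1 ∧ X ^ (n + 1) ∣ s'.2 - s.2) (a := (0, 0))
    ⟨⟨zero_mem _, dvd_zero X, by simp [curvature]⟩,
      ⟨zero_mem _, dvd_zero X, by simpa [homotopyDefect] using (hy 1).X_dvd⟩⟩
    fun n s hs => by
      obtain ⟨x', h', hs', hx, hh⟩ := hf.exists_lift_step n.succ_ne_zero (hy (n + 2)) hs.1 hs.2
      exact ⟨(x', h'), hs', hx, hh⟩
  obtain ⟨x, hx⟩ := exists_X_pow_dvd_sub (fun n => (S n).1)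
    fun n => (pow_dvd_pow X n.le_succ).trans (hS n).2.1
  obtain ⟨h, hh⟩ := exists_X_pow_dvd_sub (fun n => (S n).2)
    fun n => (pow_dvd_pow X n.le_succ).trans (hS n).2.2
  refine ⟨x, h, fun n =>
    ⟨isTwistingMod_of_X_pow_dvd_sub (fun n => (hS n).1.1.mono n.le_succ) hx n,
      isHomotopyMod_of_X_pow_dvd_sub (fun n => (hS n).1.2.mono n.le_succ)
        (fun n => by simpa using map_dvd (map f) (hx n)) hh n⟩⟩

lemma IsQuasiIso.exists_homotopy_of_map (hf : IsQuasiIso G H f) {x x' : G.A⟦X⟧}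
    (hx : ∀ n, G.IsTwistingMod n x) (hx' : ∀ n, G.IsTwistingMod n x') {k : H.A⟦X⟧}
    (hk : ∀ n, H.IsHomotopyMod n (map f x) (map f x') k) :
    ∃ g, ∀ n, G.IsHomotopyMod n x x' g := by
  obtain ⟨S, hS⟩ := exists_seq_of_step
    (fun n (s : G.A⟦X⟧ × H.A⟦X⟧) => G.IsHomotopyMod (n + 1) x x' s.1 ∧
      H.IsHomotopy₂Mod (n + 1) (map f x) (map f x') k (map f s.1) s.2)
    (fun n s s' => X ^ (n + 1) ∣ s'.1 - s.1) (a := (0, 0))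
    ⟨⟨zero_mem _, dvd_zero X,
        by simpa [homotopyDefect] using dvd_sub (hx' 1).X_dvd (hx 1).X_dvd⟩,
      ⟨zero_mem _, by simpa [homotopy₂Defect] using (hk 1).X_dvd⟩⟩
    fun n s hs => by
      obtain ⟨g', c', hs', hg⟩ := hf.exists_homotopy_step n.succ_ne_zero (hx (n + 2))
        (hx' (n + 2)) (hk (n + 2)) hs.1 hs.2
      exact ⟨(g', c'), hs', hg⟩
  obtain ⟨g, hg⟩ := exists_X_pow_dvd_sub (fun n => (S n).1)
    fun n => (pow_dvd_pow X n.le_succ).trans (hS n).2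
  exact ⟨g, isHomotopyMod_of_X_pow_dvd_sub (xs := fun _ => x) (fun n => (hS n).1.1.mono n.le_succ)
    (by simp) hg⟩

end QuasiIso

end DGA

/-- Let `f : A → B` be a homomorphism of dg-algebras (a ring
homomorphism preserving degrees and commuting with the differentials) inducing an
isomorphism on cohomology (stated degreewise: cocycles of `B` are, up to coboundaries,
images of cocycles of `A`; and cocycles of `A` whose image is exact are exact).  Then the
induced map on homotopy classes of twisting sequences `ts(A) → ts(B)` is a bijection:
every twisting sequence of `B` is homotopic to the image of a twisting sequence of `A`,
and twisting sequences of `A` with homotopic images are homotopic. -/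
theorem quasiIso_twisting_bijection (G H : DGA) (f : G.A →+* H.A)
    (hf_deg : ∀ (m : ℤ) (a : G.A), a ∈ G.grading m → f a ∈ H.grading m)
    (hf_d : ∀ a : G.A, f (G.d a) = H.d (f a))
    (hsurj : ∀ (m : ℤ) (b : H.A), b ∈ H.grading m → H.d b = 0 →
      ∃ a c, a ∈ G.grading m ∧ G.d a = 0 ∧ c ∈ H.grading (m - 1) ∧ f a - b = H.d c)
    (hinj : ∀ (m : ℤ) (a : G.A), a ∈ G.grading m → G.d a = 0 →
      (∃ c, c ∈ H.grading (m - 1) ∧ f a = H.d c) →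
      ∃ c', c' ∈ G.grading (m - 1) ∧ a = G.d c') :
    (∀ y : ℕ → H.A, IsTwistingSeq H y →
        ∃ x : ℕ → G.A, IsTwistingSeq G x ∧ Homotopic H (fun n => f (x n)) y) ∧
      (∀ x x' : ℕ → G.A, IsTwistingSeq G x → IsTwistingSeq G x' →
        Homotopic H (fun n => f (x n)) (fun n => f (x' n)) → Homotopic G x x') := by
  have hf : DGA.IsQuasiIso G H f := ⟨hf_deg, hf_d, hsurj, hinj⟩
  constructor
  · intro y hy
    obtain ⟨x, h, hxh⟩ := hf.exists_twisting_lift ((DGA.isTwistingSeq_iff y).1 hy)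
    have hx : IsTwistingSeq G fun n => coeff n x :=
      (DGA.isTwistingSeq_iff _).2 fun n => by simpa only [mk_coeff] using (hxh n).1
    refine ⟨fun n => coeff n x, hx, fun n => coeff n h,
      (DGA.isHomotopy_iff (by simp [hx.1]) hy.1 _).2 fun n => ?_⟩
    simpa only [← map_mk, mk_coeff] using (hxh n).2
  · rintro x x' hx hx' ⟨k, hk⟩
    rw [DGA.isHomotopy_iff (by simp [hx.1]) (by simp [hx'.1]), ← map_mk, ← map_mk] at hk
    obtain ⟨g, hg⟩ := hf.exists_homotopy_of_map ((DGA.isTwistingSeq_iff x).1 hx)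
      ((DGA.isTwistingSeq_iff x').1 hx') hk
    exact ⟨fun n => coeff n g, (DGA.isHomotopy_iff hx.1 hx'.1 _).2 fun n => by
      simpa only [mk_coeff] using hg n⟩
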